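/- arXiv:cs/0510092 — 2 statements merged into one kernel-verified Lean document; each statement's English description precedes it below -/
import Mathlib

section
/- Let D_G(e) be defined on box-edges by D_G(e) = {e} ∪ D_G(σ(e)) if σ(e) is defined and D_G(e) = {e} otherwise, where σ assigns to a box-edge at positive depth a box-edge of strictly smaller depth. Suppose R(e,U) ≥ 1 for all canonical U, L(e) = {ε} when depth(e) = 0, and |L(e)| ≤ Σ_{U ∈ L(σ(e))} R(σ(e),U) when depth(e) > 0. Then Σ_{U ∈ L(e)} R(e,U) ≤ (Σ_{g ∈ D_G(e)} Σ_{U ∈ L(g)} (R(g,U) − 1)) + 1. -/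
/-- `InD σ e g` : `g` belongs to `D_G(e)`, i.e. `g` is reachable from `e` by iterating `σ`. -/
inductive InD {E : Type*} (σ : E → Option E) : E → E → Prop
  | self (e : E) : InD σ e e
  | step {e g h : E} : σ e = some g → InD σ g h → InD σ e h

theorem cardinality_bound {E UU : Type*} [Fintype E]
    (σ : E → Option E) (depth : E → ℕ)
    [∀ e, DecidablePred (InD σ e)]
    (hσlt : ∀ e g, σ e = some g → depth g < depth e)
    (hσdef : ∀ e, σ e = none ↔ depth e = 0)
    (L : E → Finset UU) (R : E → UU → ℕ)
    (hR : ∀ e U, U ∈ L e → 1 ≤ R e U)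
    (hbase : ∀ e, depth e = 0 → (L e).card = 1)
    (hind : ∀ e g, σ e = some g → (L e).card ≤ ∑ U ∈ L g, R g U) :
    ∀ e, (∑ U ∈ L e, R e U) ≤
      (∑ g ∈ Finset.univ.filter (fun g => InD σ e g), ∑ U ∈ L g, (R g U - 1)) + 1 := by
  classical
  have hdle : ∀ a b, InD σ a b → depth b ≤ depth a := by
    intro a b h
    induction h with
    | self => exact le_rfl
    | step hs _ ih => exact ih.trans (hσlt _ _ hs).le
  have key : ∀ e, ∑ U ∈ L e, R e U = (∑ U ∈ L e, (R e U - 1)) + (L e).card := by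
    intro e
    rw [Finset.card_eq_sum_ones, ← Finset.sum_add_distrib]
    refine Finset.sum_congr rfl fun U hU => ?_
    have := hR e U hU; omega
  have main : ∀ n e, depth e = n → (∑ U ∈ L e, R e U) ≤
      (∑ g ∈ Finset.univ.filter (fun g => InD σ e g), ∑ U ∈ L g, (R g U - 1)) + 1 := by
    intro n
    induction n using Nat.strong_induction_on with
    | _ n ih =>
      intro e hdep
      cases hs : σ e with
      | none =>
        have hset : Finset.univ.filter (fun g => InD σ e g) = {e} := by
          ext h
          simp only [Finset.mem_filter, Finset.mem_univ, true_and, Finset.mem_singleton]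
          constructor
          · intro hin
            cases hin with
            | self => rfl
            | step hs' _ => rw [hs] at hs'; cases hs'
          · rintro rfl; exact InD.self _
        rw [hset, key e, Finset.sum_singleton, hbase e ((hσdef e).1 hs)]
      | some g =>
        have hechain : e ∉ Finset.univ.filter (fun h => InD σ g h) := by
          simp only [Finset.mem_filter, Finset.mem_univ, true_and]
          intro hin
          exact absurd (hdle _ _ hin) (not_le.mpr (hσlt _ _ hs))
        have hset : Finset.univ.filter (fun h => InD σ e h)
            = insert e (Finset.univ.filter (fun h => InD σ g h)) := by
          ext h
          simp only [Finset.mem_filter, Finset.mem_univ, true_and, Finset.mem_insert]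
          constructor
          · intro hin
            cases hin with
            | self => exact Or.inl rfl
            | step hs' ht =>
              rw [hs] at hs'
              exact Or.inr (Option.some.inj hs' ▸ ht)
          · rintro (rfl | ht)
            · exact InD.self h
            · exact InD.step hs ht
        have hih := ih (depth g) (hdep ▸ hσlt _ _ hs) g rfl
        rw [hset, Finset.sum_insert hechain, key e]
        calc (∑ U ∈ L e, (R e U - 1)) + (L e).card
            ≤ (∑ U ∈ L e, (R e U - 1)) + ∑ U ∈ L g, R g U :=
              Nat.add_le_add_left (hind e g hs) _
          _ ≤ (∑ U ∈ L e, (R e U - 1)) +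
              ((∑ h ∈ Finset.univ.filter (fun h => InD σ g h), ∑ U ∈ L h, (R h U - 1)) + 1) :=
              Nat.add_le_add_left hih _
          _ = _ := by ring
  exact fun e => main (depth e) e rfl
end

section
/- Under the assumptions of the previous lemma, for every box-edge e of G: Σ_{U ∈ L(e)} R(e,U) ≤ W(G) + 1, where W(G) = Σ_{e ∈ B_G} Σ_{U ∈ L(e)} (R(e,U) − 1) is the weight of G. -/
theorem cardinality_le_weight {E UU : Type*} [Fintype E]
    (σ : E → Option E) (depth : E → ℕ)
    (hσlt : ∀ e g, σ e = some g → depth g < depth e)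
    (hσdef : ∀ e, σ e = none ↔ depth e = 0)
    (L : E → Finset UU) (R : E → UU → ℕ)
    (hR : ∀ e U, U ∈ L e → 1 ≤ R e U)
    (hbase : ∀ e, depth e = 0 → (L e).card = 1)
    (hind : ∀ e g, σ e = some g → (L e).card ≤ ∑ U ∈ L g, R g U) :
    ∀ e, (∑ U ∈ L e, R e U) ≤
      (∑ g : E, ∑ U ∈ L g, (R g U - 1)) + 1 := by
  classical
  have split : ∀ e, (∑ U ∈ L e, R e U) =
      (∑ U ∈ L e, (R e U - 1)) + (L e).card := by
    intro e
    rw [Finset.card_eq_sum_ones, ← Finset.sum_add_distrib]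
    exact Finset.sum_congr rfl fun U hU => (Nat.sub_add_cancel (hR e U hU)).symm
  have key : ∀ n e, depth e ≤ n →
      (∑ U ∈ L e, R e U) ≤
        (∑ g ∈ Finset.univ.filter (fun g => depth g ≤ depth e),
          ∑ U ∈ L g, (R g U - 1)) + 1 := by
    intro n
    induction n with
    | zero =>
      intro e he
      have h0 : depth e = 0 := Nat.le_zero.mp he
      have hnone : σ e = none := (hσdef e).mpr h0
      rw [split e, hbase e h0]
      have hmem : e ∈ Finset.univ.filter (fun g => depth g ≤ depth e) := by
        simp
      exact Nat.add_le_add_right (Finset.single_le_sum (f := fun g => ∑ U ∈ L g, (R g U - 1))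
        (fun g _ => Nat.zero_le _) hmem) 1
    | succ n ih =>
      intro e he
      cases hσ : σ e with
      | none =>
        have h0 : depth e = 0 := (hσdef e).mp hσ
        rw [split e, hbase e h0]
        have hmem : e ∈ Finset.univ.filter (fun g => depth g ≤ depth e) := by
          simp
        exact Nat.add_le_add_right (Finset.single_le_sum (f := fun g => ∑ U ∈ L g, (R g U - 1))
          (fun g _ => Nat.zero_le _) hmem) 1
      | some g =>
        have hlt : depth g < depth e := hσlt e g hσ
        have hg : depth g ≤ n := by omega
        have h1 := ih g hg
        calc (∑ U ∈ L e, R e U)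
            = (∑ U ∈ L e, (R e U - 1)) + (L e).card := split e
          _ ≤ (∑ U ∈ L e, (R e U - 1)) + (∑ U ∈ L g, R g U) :=
              Nat.add_le_add_left (hind e g hσ) _
          _ ≤ (∑ U ∈ L e, (R e U - 1)) +
              ((∑ h ∈ Finset.univ.filter (fun h => depth h ≤ depth g),
                ∑ U ∈ L h, (R h U - 1)) + 1) := Nat.add_le_add_left h1 _
          _ = ((∑ h ∈ insert e (Finset.univ.filter (fun h => depth h ≤ depth g)),
                ∑ U ∈ L h, (R h U - 1))) + 1 := by
              rw [Finset.sum_insert (by simp; omega)]; ring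
          _ ≤ (∑ h ∈ Finset.univ.filter (fun h => depth h ≤ depth e),
                ∑ U ∈ L h, (R h U - 1)) + 1 := by
              refine Nat.add_le_add_right (Finset.sum_le_sum_of_subset ?_) 1
              intro x hx
              simp only [Finset.mem_insert, Finset.mem_filter, Finset.mem_univ,
                true_and] at hx ⊢
              rcases hx with rfl | hx
              · exact le_refl _
              · omega
  intro e
  calc (∑ U ∈ L e, R e U)
      ≤ (∑ g ∈ Finset.univ.filter (fun g => depth g ≤ depth e),
          ∑ U ∈ L g, (R g U - 1)) + 1 := key (depth e) e le_rfl
    _ ≤ (∑ g : E, ∑ U ∈ L g, (R g U - 1)) + 1 :=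
        Nat.add_le_add_right (Finset.sum_le_sum_of_subset (Finset.filter_subset _ _)) 1
end
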